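/- arXiv:2104.13081 — 2 statements merged into one kernel-verified Lean document; each statement's English description precedes it below -/
import Mathlib

section
/- Let g : [0,1]^m → [0,1] be non-decreasing in each argument, and suppose that whenever U_1,...,U_m are independent Uni[0,1] random variables, g(U_1,...,U_m) is stochastically at least Uni[0,1]. Let p_1,...,p_m be jointly independent random variables in [0,1], each stochastically at least Uni[0,1]. Then g(p_1,...,p_m) is stochastically at least Uni[0,1]. -/
/-!
Let `ρᵢ` be the law of `pᵢ`. The quantile transform `Qᵢ` of `ρᵢ` pushes `Uni[0,1]` to `ρᵢ`, and
validity of `pᵢ` says `cdf ρᵢ ≤ id`, i.e. `Qᵢ(u) ≥ u`. Applied coordinatewise to independent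
uniforms this couples `(pᵢ)` above `(Uᵢ)`, so the law of `p` gives at most as much mass as the
uniform product to every lower set. The event `{g ≤ t}` is a lower set by monotonicity; replacing
it by its closure makes it measurable and, since the frontier of a lower set in `ℝᵐ` is
Lebesgue-null, costs nothing for the uniform product, where the hypothesis on `g` bounds it by `t`.
-/

open MeasureTheory ProbabilityTheory Set

noncomputable def unitUniform : Measure ℝ := volume.restrict (Icc 0 1)

instance : IsProbabilityMeasure unitUniform :=
  ⟨by simp [unitUniform, Real.volume_Icc]⟩

lemma unitUniform_apply (A : Set ℝ) : unitUniform A = volume (A ∩ Icc 0 1) :=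
  Measure.restrict_apply' measurableSet_Icc

lemma unitUniform_Iic {s : ℝ} (hs : s ≤ 1) :
    unitUniform (Iic s) = ENNReal.ofReal s := by
  have : Iic s ∩ Icc 0 1 = Icc 0 s := by
    ext v; simp only [mem_inter_iff, mem_Iic, mem_Icc]; grind
  rw [unitUniform_apply, this, Real.volume_Icc, sub_zero]

lemma pi_unitUniform_le_volume (ι : Type*) [Fintype ι] :
    Measure.pi (fun _ : ι => unitUniform) ≤ volume := by
  rw [unitUniform, ← Measure.restrict_pi_pi]
  exact Measure.restrict_le_self

/-- The generalised inverse of `cdf ρ`, clamped (nonnegative, constant on `[1, ∞)`) so that it is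
monotone on all of `ℝ` when `ρ` lives on `[0, 1]`. -/
noncomputable def quantile (ρ : Measure ℝ) (v : ℝ) : ℝ :=
  sInf {s | 0 ≤ s ∧ min v 1 ≤ cdf ρ s}

section Quantile

variable {ρ : Measure ℝ}

lemma bddBelow_quantileSet (v : ℝ) : BddBelow {s | 0 ≤ s ∧ min v 1 ≤ cdf ρ s} :=
  ⟨0, fun _ hs => hs.1⟩

lemma quantile_nonneg (v : ℝ) : 0 ≤ quantile ρ v :=
  Real.sInf_nonneg fun _ hs => hs.1

lemma quantile_le {v s : ℝ} (hs : 0 ≤ s) (h : min v 1 ≤ cdf ρ s) : quantile ρ v ≤ s :=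
  csInf_le (bddBelow_quantileSet v) ⟨hs, h⟩

variable (h1 : cdf ρ 1 = 1)
include h1

lemma nonempty_quantileSet (v : ℝ) : {s | 0 ≤ s ∧ min v 1 ≤ cdf ρ s}.Nonempty :=
  ⟨1, zero_le_one, by rw [h1]; exact min_le_right v 1⟩

lemma monotone_quantile : Monotone (quantile ρ) := fun _ v' hv =>
  csInf_le_csInf (bddBelow_quantileSet _) (nonempty_quantileSet h1 v')
    fun _ hs => ⟨hs.1, (min_le_min_right 1 hv).trans hs.2⟩

lemma measurable_quantile : Measurable (quantile ρ) :=
  (monotone_quantile h1).measurable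

lemma min_le_cdf_of_quantile_le {v s : ℝ} (h : quantile ρ v ≤ s) : min v 1 ≤ cdf ρ s := by
  have hright : ∀ x, s < x → min v 1 ≤ cdf ρ x := by
    intro x hx
    obtain ⟨y, hy, hyx⟩ := (Real.sInf_le_iff (bddBelow_quantileSet v)
      (nonempty_quantileSet h1 v)).mp h (x - s) (by linarith)
    exact hy.2.trans (monotone_cdf ρ (by linarith))
  have hcont : Filter.Tendsto (cdf ρ) (nhdsWithin s (Ioi s)) (nhds (cdf ρ s)) :=
    ((cdf ρ).right_continuous s).tendsto.mono_left (nhdsWithin_mono s Ioi_subset_Ici_self)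
  exact ge_of_tendsto hcont (eventually_nhdsWithin_of_forall hright)

lemma quantile_le_iff {v s : ℝ} (hv : v ≤ 1) (hs : 0 ≤ s) : quantile ρ v ≤ s ↔ v ≤ cdf ρ s := by
  have hmin : min v 1 = v := min_eq_left hv
  exact ⟨fun h => hmin ▸ min_le_cdf_of_quantile_le h1 h, fun h => quantile_le hs (hmin.symm ▸ h)⟩

lemma le_quantile (hdom : ∀ s ∈ Icc (0 : ℝ) 1, cdf ρ s ≤ s) {v : ℝ} (hv : v ≤ 1) :
    v ≤ quantile ρ v := by
  refine le_csInf (nonempty_quantileSet h1 v) fun s hs => ?_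
  rcases le_or_gt s 1 with hs1 | hs1
  · exact (min_eq_left hv ▸ hs.2).trans (hdom s ⟨hs.1, hs1⟩)
  · linarith

lemma map_quantile_unitUniform [IsProbabilityMeasure ρ] (h0 : ∀ s < 0, cdf ρ s = 0) :
    unitUniform.map (quantile ρ) = ρ := by
  refine Measure.ext_of_Iic _ _ fun s => ?_
  rw [Measure.map_apply (measurable_quantile h1) measurableSet_Iic, unitUniform_apply,
    ← ofReal_cdf]
  rcases lt_or_ge s 0 with hs | hs
  · have : quantile ρ ⁻¹' Iic s = ∅ :=
      eq_empty_of_forall_notMem fun v hv => (quantile_nonneg v).not_gt (lt_of_le_of_lt hv hs)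
    rw [this, empty_inter, measure_empty, h0 s hs, ENNReal.ofReal_zero]
  · have : quantile ρ ⁻¹' Iic s ∩ Icc 0 1 = Icc 0 (cdf ρ s) := by
      ext v
      simp only [mem_inter_iff, mem_preimage, mem_Iic, mem_Icc]
      constructor
      · rintro ⟨hq, hv0, hv1⟩
        exact ⟨hv0, (quantile_le_iff h1 hv1 hs).mp hq⟩
      · rintro ⟨hv0, hv⟩
        have hv1 : v ≤ 1 := hv.trans (cdf_le_one ρ s)
        exact ⟨(quantile_le_iff h1 hv1 hs).mpr hv, hv0, hv1⟩
    rw [this, Real.volume_Icc, sub_zero]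

end Quantile

theorem measure_pi_le_pi_unitUniform_of_isLowerSet {ι : Type*} [Fintype ι] {ρ : ι → Measure ℝ}
    [∀ i, IsProbabilityMeasure (ρ i)] (h1 : ∀ i, cdf (ρ i) 1 = 1)
    (hdom : ∀ i, ∀ s ∈ Icc (0 : ℝ) 1, cdf (ρ i) s ≤ s) {K : Set (ι → ℝ)} (hK : IsLowerSet K)
    (hKm : MeasurableSet K) : Measure.pi ρ K ≤ Measure.pi (fun _ => unitUniform) K := by
  have h0 : ∀ i, ∀ s < 0, cdf (ρ i) s = 0 := fun i s hs =>
    le_antisymm ((monotone_cdf _ hs.le).trans (hdom i 0 ⟨le_rfl, zero_le_one⟩)) (cdf_nonneg _ _)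
  have hcoupling : (Measure.pi fun _ => unitUniform).map (fun u i => quantile (ρ i) (u i))
      = Measure.pi ρ := by
    rw [Measure.pi_map_pi fun i => (measurable_quantile (h1 i)).aemeasurable]
    simp_rw [map_quantile_unitUniform (h1 _) (h0 _)]
  have hle : ∀ᵐ u ∂(Measure.pi fun _ : ι => unitUniform), ∀ i, u i ≤ quantile (ρ i) (u i) := by
    refine ae_all_iff.mpr fun i => ?_
    have hv : ∀ᵐ v ∂unitUniform, v ≤ quantile (ρ i) v :=
      (ae_restrict_mem measurableSet_Icc).mono fun v hv => le_quantile (h1 i) (hdom i) hv.2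
    exact (measurePreserving_eval (fun _ : ι => unitUniform) i).quasiMeasurePreserving.ae hv
  have hmeas : Measurable fun (u : ι → ℝ) i => quantile (ρ i) (u i) :=
    measurable_pi_lambda _ fun i => (measurable_quantile (h1 i)).comp (measurable_pi_apply i)
  rw [← hcoupling, Measure.map_apply hmeas hKm]
  exact measure_mono_ae (hle.mono fun u hu hmem => hK hu hmem)

lemma pi_unitUniform_closure_of_isLowerSet {ι : Type*} [Fintype ι] {S : Set (ι → ℝ)}
    (hS : IsLowerSet S) :
    Measure.pi (fun _ : ι => unitUniform) (closure S) = Measure.pi (fun _ => unitUniform) S := by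
  have hfrontier : Measure.pi (fun _ : ι => unitUniform) (frontier S) = 0 :=
    nonpos_iff_eq_zero.mp ((pi_unitUniform_le_volume ι _).trans_eq hS.null_frontier)
  refine le_antisymm ?_ (measure_mono subset_closure)
  calc _ ≤ Measure.pi (fun _ : ι => unitUniform) S
        + Measure.pi (fun _ : ι => unitUniform) (frontier S) := by
        rw [closure_eq_self_union_frontier]; exact measure_union_le _ _
    _ = _ := by rw [hfrontier, add_zero]

lemma ofReal_cdf_map {Ω : Type*} [MeasurableSpace Ω] {μ : Measure Ω} [IsProbabilityMeasure μ]
    {X : Ω → ℝ} (hX : Measurable X) (s : ℝ) :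
    ENNReal.ofReal (cdf (μ.map X) s) = μ {ω | X ω ≤ s} := by
  have := Measure.isProbabilityMeasure_map (μ := μ) hX.aemeasurable
  rw [ofReal_cdf, Measure.map_apply hX measurableSet_Iic]
  rfl

theorem stmt7_general (m : ℕ) (g : (Fin m → ℝ) → ℝ)
    (hmono : ∀ x y : Fin m → ℝ, (∀ i, x i ≤ y i) → g x ≤ g y)
    (hgvalid : ∀ (Ω' : Type) (_ : MeasurableSpace Ω') (ν : Measure Ω')
      (_ : IsProbabilityMeasure ν) (V : Fin m → Ω' → ℝ), (∀ i, Measurable (V i)) →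
      iIndepFun V ν →
      (∀ i, ∀ t ∈ Set.Icc (0 : ℝ) 1, ν {ω | V i ω ≤ t} = ENNReal.ofReal t) →
      ∀ t ∈ Set.Icc (0 : ℝ) 1, ν {ω | g (fun i => V i ω) ≤ t} ≤ ENNReal.ofReal t)
    {Ω : Type} [MeasurableSpace Ω] (μ : Measure Ω) [IsProbabilityMeasure μ]
    (p : Fin m → Ω → ℝ) (hpm : ∀ i, Measurable (p i))
    (hprange : ∀ i ω, p i ω ∈ Set.Icc (0 : ℝ) 1)
    (hindep : iIndepFun p μ)
    (hvalid : ∀ i, ∀ t ∈ Set.Icc (0 : ℝ) 1, μ {ω | p i ω ≤ t} ≤ ENNReal.ofReal t) :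
    ∀ t ∈ Set.Icc (0 : ℝ) 1, μ {ω | g (fun i => p i ω) ≤ t} ≤ ENNReal.ofReal t := by
  intro t ht
  have := fun i => Measure.isProbabilityMeasure_map (μ := μ) (hpm i).aemeasurable
  have h1 : ∀ i, cdf (μ.map (p i)) 1 = 1 := fun i => by
    rw [← ENNReal.ofReal_eq_one, ofReal_cdf_map (hpm i)]
    simp [fun ω => (hprange i ω).2]
  have hdom : ∀ i, ∀ s ∈ Icc (0 : ℝ) 1, cdf (μ.map (p i)) s ≤ s := fun i s hs => by
    rw [← ENNReal.ofReal_le_ofReal_iff hs.1, ofReal_cdf_map (hpm i)]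
    exact hvalid i s hs
  set S := {x : Fin m → ℝ | g x ≤ t}
  have hS : IsLowerSet S := fun x y hyx hx => (hmono y x hyx).trans hx
  let ν := Measure.pi fun _ : Fin m => unitUniform
  have hcoord_unif : ∀ i, ∀ s ∈ Icc (0 : ℝ) 1, ν {u | u i ≤ s} = ENNReal.ofReal s :=
    fun i s hs => ((measurePreserving_eval _ i).measure_preimage
      measurableSet_Iic.nullMeasurableSet).trans (unitUniform_Iic hs.2)
  calc μ {ω | g (fun i => p i ω) ≤ t} ≤ μ ((fun ω i => p i ω) ⁻¹' closure S) :=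
        measure_mono fun ω hω => subset_closure hω
    _ = Measure.pi (fun i => μ.map (p i)) (closure S) := by
        rw [← hindep.map_fun_eq_pi_map fun i => (hpm i).aemeasurable,
          Measure.map_apply (measurable_pi_lambda _ hpm) isClosed_closure.measurableSet]
    _ ≤ ν (closure S) := measure_pi_le_pi_unitUniform_of_isLowerSet h1 hdom hS.closure
        isClosed_closure.measurableSet
    _ = ν S := pi_unitUniform_closure_of_isLowerSet hS
    _ ≤ ENNReal.ofReal t := hgvalid _ _ ν inferInstance (fun i u => u i) measurable_pi_apply
        (iIndepFun_pi (X := fun _ => id) fun _ => aemeasurable_id) hcoord_unif t ht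

/-- If `g` is coordinatewise non-decreasing and `g` of any independent `Uni[0,1]` family
is stochastically at least `Uni[0,1]`, then `g` of any jointly independent family of
valid p-values is stochastically at least `Uni[0,1]`. -/
theorem stmt7 (m : ℕ) (hm : 0 < m) (g : (Fin m → ℝ) → ℝ)
    (hrange : ∀ x, (∀ i, x i ∈ Set.Icc (0 : ℝ) 1) → g x ∈ Set.Icc (0 : ℝ) 1)
    (hmono : ∀ x y : Fin m → ℝ, (∀ i, x i ≤ y i) → g x ≤ g y)
    (hgvalid : ∀ (Ω' : Type) (_ : MeasurableSpace Ω') (ν : Measure Ω')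
      (_ : IsProbabilityMeasure ν) (V : Fin m → Ω' → ℝ), (∀ i, Measurable (V i)) →
      iIndepFun V ν →
      (∀ i, ∀ t ∈ Set.Icc (0 : ℝ) 1, ν {ω | V i ω ≤ t} = ENNReal.ofReal t) →
      ∀ t ∈ Set.Icc (0 : ℝ) 1, ν {ω | g (fun i => V i ω) ≤ t} ≤ ENNReal.ofReal t)
    {Ω : Type} [MeasurableSpace Ω] (μ : Measure Ω) [IsProbabilityMeasure μ]
    (p : Fin m → Ω → ℝ) (hpm : ∀ i, Measurable (p i))
    (hprange : ∀ i ω, p i ω ∈ Set.Icc (0 : ℝ) 1)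
    (hindep : iIndepFun p μ)
    (hvalid : ∀ i, ∀ t ∈ Set.Icc (0 : ℝ) 1, μ {ω | p i ω ≤ t} ≤ ENNReal.ofReal t) :
    ∀ t ∈ Set.Icc (0 : ℝ) 1, μ {ω | g (fun i => p i ω) ≤ t} ≤ ENNReal.ofReal t :=
  stmt7_general m g hmono hgvalid μ p hpm hprange hindep hvalid
end

section
/- Let e_1,...,e_s be nonnegative random variables, at least s-γ+1 of which have expectation at most 1. Let h_0 : [0,∞]^{s-γ+1} → [0,∞] be symmetric, non-decreasing in each argument, and such that h_0 applied to any family of s-γ+1 e-variables (each with expectation ≤ 1) has expectation at most 1. Then h_0(e_{(1)},...,e_{(s-γ+1)}) applied to the s-γ+1 smallest order statistics of e_1,...,e_s has expectation at most 1. -/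
/-!
Pick `s - γ + 1` of the `e_i` with expectation at most `1`. Pointwise, the `j`-th smallest
of all the `e_i` is at most the `j`-th smallest of the picked ones, so by monotonicity and
symmetry of `h₀` the integrand is dominated by `h₀` applied to the picked e-variables, whose
expectation is at most `1` by assumption.
-/

open MeasureTheory Finset

namespace Tuple

variable {α : Type*} [LinearOrder α] {n : ℕ}

lemma sort_apply_le_of_lt_card {v : Fin n → α} {u : α} {j : Fin n}
    (hj : j.1 < #{i | v i ≤ u}) : v (sort v j) ≤ u := by
  by_contra! hlt
  have hcard : #{i | v i ≤ u} ≤ #(Iio j) := by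
    refine card_le_card_of_injOn (sort v).symm (fun i hi => ?_) (sort v).symm.injective.injOn
    rw [mem_coe, mem_filter] at hi
    rw [mem_coe, mem_Iio]
    by_contra! hji
    have := monotone_sort v hji
    rw [Function.comp_apply, Function.comp_apply, Equiv.apply_symm_apply] at this
    exact (this.trans hi.2).not_gt hlt
  rw [Fin.card_Iio] at hcard
  omega

lemma sort_apply_le_sort_comp_apply {k : ℕ} (v : Fin n → α) {g : Fin k → Fin n}
    (hg : Function.Injective g) (j : Fin k) (hj : j.1 < n) :
    v (sort v ⟨j, hj⟩) ≤ (v ∘ g) (sort (v ∘ g) j) := by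
  apply sort_apply_le_of_lt_card
  have hcard : #(Iic j) ≤ #{i | v i ≤ (v ∘ g) (sort (v ∘ g) j)} := by
    refine card_le_card_of_injOn (g ∘ sort (v ∘ g)) (fun i hi => ?_)
      (hg.comp (sort (v ∘ g)).injective).injOn
    rw [coe_filter]
    exact ⟨mem_univ _, monotone_sort (v ∘ g) (mem_Iic.mp hi)⟩
  rw [Fin.card_Iic] at hcard
  simpa using hcard

end Tuple

/-- Partial conjunction for e-values: if at least `s - γ + 1` of the nonnegative random
variables `e_1, …, e_s` have expectation at most `1`, and `h₀` is a symmetric,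
coordinatewise non-decreasing combination function such that `h₀` applied to any family
of `s - γ + 1` e-variables has expectation at most `1`, then `h₀` applied to the
`s - γ + 1` smallest order statistics of `e_1, …, e_s` has expectation at most `1`. -/
theorem stmt12 {Ω : Type} [MeasurableSpace Ω] (μ : Measure Ω) [IsProbabilityMeasure μ]
    (s γ : ℕ) (hγ1 : 1 ≤ γ) (hγs : γ ≤ s)
    (e : Fin s → Ω → ENNReal) (hem : ∀ i, Measurable (e i))
    (hvalid : ∃ T : Finset (Fin s), s - γ + 1 ≤ T.card ∧
      ∀ i ∈ T, ∫⁻ ω, e i ω ∂μ ≤ 1)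
    (h₀ : (Fin (s - γ + 1) → ENNReal) → ENNReal)
    (hsymm : ∀ (σ : Equiv.Perm (Fin (s - γ + 1))) (x : Fin (s - γ + 1) → ENNReal),
      h₀ (x ∘ σ) = h₀ x)
    (hmono : ∀ x y : Fin (s - γ + 1) → ENNReal, (∀ j, x j ≤ y j) → h₀ x ≤ h₀ y)
    (hvalid₀ : ∀ (Ω' : Type) (_ : MeasurableSpace Ω') (ν : Measure Ω')
      (_ : IsProbabilityMeasure ν) (f : Fin (s - γ + 1) → Ω' → ENNReal),
      (∀ j, Measurable (f j)) → (∀ j, ∫⁻ ω, f j ω ∂ν ≤ 1) →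
      ∫⁻ ω, h₀ (fun j => f j ω) ∂ν ≤ 1) :
    ∫⁻ ω, h₀ (fun j =>
        (fun i => e i ω) (Tuple.sort (fun i => e i ω) ⟨j.1, by omega⟩)) ∂μ ≤ 1 := by
  obtain ⟨T, hTcard, hT⟩ := hvalid
  obtain ⟨T', hT'T, hT'card⟩ := exists_subset_card_eq hTcard
  set g := T'.orderEmbOfFin hT'card
  have hdom : ∀ ω, h₀ (fun j =>
      (fun i => e i ω) (Tuple.sort (fun i => e i ω) ⟨j.1, by omega⟩)) ≤
      h₀ (fun j => e (g j) ω) := fun ω =>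
    (hmono _ _ fun j =>
      Tuple.sort_apply_le_sort_comp_apply (fun i => e i ω) g.injective j _).trans_eq
        (hsymm (Tuple.sort _) (fun j => e (g j) ω))
  calc _ ≤ ∫⁻ ω, h₀ (fun j => e (g j) ω) ∂μ := lintegral_mono hdom
    _ ≤ 1 := hvalid₀ Ω _ μ inferInstance (fun j => e (g j)) (fun j => hem (g j))
        (fun j => hT (g j) (hT'T (T'.orderEmbOfFin_mem hT'card j)))
end
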